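/- arXiv:0812.5024 — 7 statements merged into one kernel-verified Lean document; each statement's English description precedes it below -/
import Mathlib

section
/- Under the hypotheses of the stability theorem for n-ring homomorphisms (f : A → B with ‖f(a+b)−f(a)−f(b)‖ ≤ ε and ‖f(a₁⋯aₙ) − f(a₁)⋯f(aₙ)‖ ≤ δ, h the associated n-ring homomorphism with ‖f−h‖ ≤ ε), for all a₁,…,aₙ ∈ A and every k ∈ {1,…,n−1} one has h(a₁)⋯h(a_k)·(f(a_{k+1})⋯f(aₙ) − h(a_{k+1})⋯h(aₙ)) = 0 and (f(a₁)⋯f(a_k) − h(a₁)⋯h(a_k))·h(a_{k+1})⋯h(aₙ) = 0. -/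
open Filter Topology

/-!
Scale a nonempty block `v` of a product of `n` factors `u ++ v ++ w` by `c = 2 ^ m` inside the
argument of `f`. Since `h` is additive and multiplicative on `n`-fold products,
`h` of the scaled product is `c ^ |v| • h (Π (u ++ v ++ w))`, and the two approximation bounds
put `Π f u * Π f (c • v) * Π f w` within `ε + δ` of it. Dividing by `c ^ |v|` and letting
`m → ∞`, the middle block turns into `Π h v`, so `Π f u * Π h v * Π f w = Π h (u ++ v ++ w)`.
Both identities are the special cases `u = []` and `w = []`.
-/

theorem List.forall_of_forall_ofFn {α : Type*} {n : ℕ} {P : List α → Prop}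
    (H : ∀ a : Fin n → α, P (List.ofFn a)) (l : List α) (hl : l.length = n) : P l := by
  subst hl
  simpa using H (fun i => l[i])

theorem tendsto_inv_two_pow_pow_mul_nhds_zero {k : ℕ} (hk : k ≠ 0) (C : ℝ) :
    Tendsto (fun m : ℕ => ((2 : ℝ) ^ m)⁻¹ ^ k * C) atTop (𝓝 0) := by
  have h2 : Tendsto (fun m : ℕ => ((2 : ℝ) ^ m)⁻¹) atTop (𝓝 0) :=
    tendsto_inv_atTop_zero.comp (tendsto_pow_atTop_atTop_of_one_lt one_lt_two)
  simpa [zero_pow hk] using (h2.pow k).mul_const C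

section

variable {A B : Type*} [Semiring A] {n : ℕ} {ε δ : ℝ}

theorem norm_nsmul_prod_map_sub_prod_map_le [SeminormedRing B] {f h : A → B}
    (hmul : ∀ a : Fin n → A, ‖f (List.ofFn a).prod - ((List.ofFn a).map f).prod‖ ≤ δ)
    (hh : ∀ a b : A, h (a + b) = h a + h b)
    (hhom : ∀ a : Fin n → A, h (List.ofFn a).prod = ((List.ofFn a).map h).prod)
    (hbound : ∀ a : A, ‖f a - h a‖ ≤ ε)
    (u v w : List A) (hlen : (u ++ v ++ w).length = n) (c : ℕ) :
    ‖c ^ v.length • ((u ++ v ++ w).map h).prod -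
        (u.map f).prod * (v.map fun x => f (c • x)).prod * (w.map f).prod‖ ≤ ε + δ := by
  set L := u ++ v.map (c • ·) ++ w
  have hL : L.length = n := by simpa [L] using hlen
  have h_nsmul (x : A) : h (c • x) = c • h x := map_nsmul (AddMonoidHom.mk' h hh) c x
  have hmap : (v.map (c • ·)).map h = (v.map h).map (c • ·) := by
    simp only [List.map_map, Function.comp_def, h_nsmul]
  have hhL : h L.prod = c ^ v.length • ((u ++ v ++ w).map h).prod := by
    rw [List.forall_of_forall_ofFn (P := fun l => h l.prod = (l.map h).prod) hhom L hL]
    simp only [L, List.map_append, hmap, List.prod_append, ← List.smul_prod, List.length_map,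
      mul_smul_comm, smul_mul_assoc]
  have hfL : (L.map f).prod =
      (u.map f).prod * (v.map fun x => f (c • x)).prod * (w.map f).prod := by
    simp only [L, List.map_append, List.map_map, List.prod_append, Function.comp_def]
  rw [← hhL, ← hfL, ← sub_add_sub_cancel _ (f L.prod)]
  refine (norm_add_le _ _).trans (add_le_add ?_
    (List.forall_of_forall_ofFn (P := fun l => ‖f l.prod - (l.map f).prod‖ ≤ δ) hmul L hL))
  rw [norm_sub_rev]
  exact hbound _

theorem prod_map_mul_prod_map_mul_prod_map_eq [NormedRing B] [NormedAlgebra ℝ B] {f h : A → B}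
    (hmul : ∀ a : Fin n → A, ‖f (List.ofFn a).prod - ((List.ofFn a).map f).prod‖ ≤ δ)
    (hlim : ∀ a : A, Tendsto (fun m : ℕ => ((2 : ℝ) ^ m)⁻¹ • f ((2 ^ m : ℕ) • a))
      atTop (𝓝 (h a)))
    (hh : ∀ a b : A, h (a + b) = h a + h b)
    (hhom : ∀ a : Fin n → A, h (List.ofFn a).prod = ((List.ofFn a).map h).prod)
    (hbound : ∀ a : A, ‖f a - h a‖ ≤ ε)
    (u v w : List A) (hv : v ≠ []) (hlen : (u ++ v ++ w).length = n) :
    (u.map f).prod * (v.map h).prod * (w.map f).prod = ((u ++ v ++ w).map h).prod := by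
  set P := ((u ++ v ++ w).map h).prod
  let g : ℕ → B := fun m =>
    (u.map f).prod * (v.map fun x => ((2 : ℝ) ^ m)⁻¹ • f ((2 ^ m : ℕ) • x)).prod * (w.map f).prod
  have hg_lim : Tendsto g atTop (𝓝 ((u.map f).prod * (v.map h).prod * (w.map f).prod)) :=
    ((tendsto_list_prod v fun x _ => hlim x).const_mul _).mul_const _
  have hg_close (m : ℕ) : ‖g m - P‖ ≤ ((2 : ℝ) ^ m)⁻¹ ^ v.length * (ε + δ) := by
    have hcancel : ((2 : ℝ) ^ m)⁻¹ ^ v.length • ((2 ^ m : ℕ) ^ v.length • P) = P := by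
      rw [← Nat.cast_smul_eq_nsmul ℝ, smul_smul]
      push_cast
      rw [← mul_pow, inv_mul_cancel₀ (by positivity), one_pow, one_smul]
    have hg : g m - P = ((2 : ℝ) ^ m)⁻¹ ^ v.length •
        ((u.map f).prod * (v.map fun x => f ((2 ^ m : ℕ) • x)).prod * (w.map f).prod -
          (2 ^ m : ℕ) ^ v.length • P) := by
      rw [smul_sub, hcancel, ← smul_mul_assoc, ← mul_smul_comm,
        ← List.length_map (fun x => f ((2 ^ m : ℕ) • x)), List.smul_prod, List.map_map]
      rfl
    rw [hg, norm_smul, norm_sub_rev, norm_pow, norm_inv, Real.norm_of_nonneg (by positivity)]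
    exact mul_le_mul_of_nonneg_left
      (norm_nsmul_prod_map_sub_prod_map_le hmul hh hhom hbound u v w hlen _) (by positivity)
  have hg_lim' : Tendsto g atTop (𝓝 P) :=
    tendsto_iff_norm_sub_tendsto_zero.2 <| squeeze_zero (fun _ => norm_nonneg _) hg_close
      (tendsto_inv_two_pow_pow_mul_nhds_zero (List.length_pos_iff.2 hv).ne' _)
  exact tendsto_nhds_unique hg_lim hg_lim'

end

theorem stmt_1_general {A B : Type*} [Ring A] [NormedRing B] [NormedAlgebra ℝ B]
    (n : ℕ) (ε δ : ℝ) (f h : A → B)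
    (hmul : ∀ a : Fin n → A,
      ‖f (List.ofFn a).prod - ((List.ofFn a).map f).prod‖ ≤ δ)
    (hlim : ∀ a : A, Tendsto (fun m : ℕ => ((2 : ℝ) ^ m)⁻¹ • f ((2 ^ m : ℕ) • a))
      atTop (𝓝 (h a)))
    (hh : ∀ a b : A, h (a + b) = h a + h b)
    (hhom : ∀ a : Fin n → A, h (List.ofFn a).prod = ((List.ofFn a).map h).prod)
    (hbound : ∀ a : A, ‖f a - h a‖ ≤ ε) :
    ∀ (a : Fin n → A) (k : ℕ), 1 ≤ k → k ≤ n - 1 →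
      (((List.ofFn a).take k).map h).prod *
          ((((List.ofFn a).drop k).map f).prod - (((List.ofFn a).drop k).map h).prod) = 0 ∧
      ((((List.ofFn a).take k).map f).prod - (((List.ofFn a).take k).map h).prod) *
          (((List.ofFn a).drop k).map h).prod = 0 := by
  intro a k hk1 hk2
  set l := List.ofFn a
  have hlen : l.length = n := List.length_ofFn
  have hsplit : (l.map h).prod = ((l.take k).map h).prod * ((l.drop k).map h).prod := by
    rw [← List.prod_append, ← List.map_append, List.take_append_drop]
  have hleft := prod_map_mul_prod_map_mul_prod_map_eq hmul hlim hh hhom hbound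
    [] (l.take k) (l.drop k) (List.ne_nil_of_length_pos (by simp [hlen]; omega))
    (by rw [List.nil_append, List.take_append_drop, hlen])
  have hright := prod_map_mul_prod_map_mul_prod_map_eq hmul hlim hh hhom hbound
    (l.take k) (l.drop k) [] (List.ne_nil_of_length_pos (by simp [hlen]; omega))
    (by rw [List.append_nil, List.take_append_drop, hlen])
  rw [List.nil_append, List.take_append_drop, hsplit, List.map_nil, List.prod_nil,
    one_mul] at hleft
  rw [List.append_nil, List.take_append_drop, hsplit, List.map_nil, List.prod_nil,
    mul_one] at hright
  rw [mul_sub, sub_mul, sub_eq_zero, sub_eq_zero]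
  exact ⟨hleft, hright⟩

/-- Identity (2.4) of Theorem 2.1. -/
theorem stmt_1 {A B : Type*} [Ring A] [NormedRing B] [NormedAlgebra ℝ B]
    [CompleteSpace B]
    (n : ℕ) (hn : 2 ≤ n) (ε δ : ℝ) (hε : 0 ≤ ε) (hδ : 0 ≤ δ) (f h : A → B)
    (hadd : ∀ a b : A, ‖f (a + b) - f a - f b‖ ≤ ε)
    (hmul : ∀ a : Fin n → A,
      ‖f (List.ofFn a).prod - ((List.ofFn a).map f).prod‖ ≤ δ)
    (hlim : ∀ a : A, Tendsto (fun m : ℕ => ((2 : ℝ) ^ m)⁻¹ • f ((2 ^ m : ℕ) • a))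
      atTop (𝓝 (h a)))
    (hh : ∀ a b : A, h (a + b) = h a + h b)
    (hhom : ∀ a : Fin n → A, h (List.ofFn a).prod = ((List.ofFn a).map h).prod)
    (hbound : ∀ a : A, ‖f a - h a‖ ≤ ε) :
    ∀ (a : Fin n → A) (k : ℕ), 1 ≤ k → k ≤ n - 1 →
      (((List.ofFn a).take k).map h).prod *
          ((((List.ofFn a).drop k).map f).prod - (((List.ofFn a).drop k).map h).prod) = 0 ∧
      ((((List.ofFn a).take k).map f).prod - (((List.ofFn a).take k).map h).prod) *
          (((List.ofFn a).drop k).map h).prod = 0 :=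
  stmt_1_general n ε δ f h hmul hlim hh hhom hbound
end

section
/- Let A be a ring, B a Banach algebra, and suppose f : A → B satisfies ‖f(a+b)−f(a)−f(b)‖ ≤ ε and ‖f(a₁⋯aₙ) − f(a₁)⋯f(aₙ)‖ ≤ δ for all elements of A. Let h(a) = limₘ 2^{−m} f(2^m a). Then h(a₁a₂⋯aₙ) = h(a₁)·f(a₂)⋯f(aₙ) for all a₁,…,aₙ ∈ A. -/
/-!
Multiplying the first factor by `2 ^ m` multiplies the whole product by `2 ^ m`, so
`f (2 ^ m • (x * y))` and `f (2 ^ m • x) * ∏ f` differ by at most `δ`. After the rescaling by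
`2⁻¹ ^ m` in Hyers' limit this bounded defect disappears, leaving `h (x * y) = h x * ∏ f`.
-/

open Filter Topology

theorem Filter.Tendsto.eq_mul_of_norm_sub_mul_le {ι B : Type*} [NormedRing B]
    [NormedAlgebra ℝ B] {l : Filter ι} [l.NeBot] {c : ι → ℝ} {u v : ι → B} {U V p : B}
    {δ : ℝ} (hc : Tendsto c l (𝓝 0)) (hu : Tendsto (fun i => c i • u i) l (𝓝 U))
    (hv : Tendsto (fun i => c i • v i) l (𝓝 V)) (hδ : ∀ i, ‖u i - v i * p‖ ≤ δ) :
    U = V * p := by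
  have hzero : Tendsto (fun i => c i • (u i - v i * p)) l (𝓝 0) :=
    hc.zero_smul_isBoundedUnder_le (isBoundedUnder_of ⟨δ, hδ⟩)
  have hlim : Tendsto (fun i => c i • (u i - v i * p)) l (𝓝 (U - V * p)) := by
    simpa only [smul_sub, smul_mul_assoc] using hu.sub (hv.mul_const p)
  exact sub_eq_zero.mp (tendsto_nhds_unique hlim hzero)

theorem hyersLimit_mul_eq_of_norm_sub_mul_le {A B : Type*} [Ring A] [NormedRing B]
    [NormedAlgebra ℝ B] {f h : A → B}
    (hlim : ∀ a : A, Tendsto (fun m : ℕ => ((2 : ℝ) ^ m)⁻¹ • f ((2 ^ m : ℕ) • a))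
      atTop (𝓝 (h a)))
    {x y : A} {p : B} {δ : ℝ}
    (hδ : ∀ m : ℕ, ‖f ((2 ^ m : ℕ) • x * y) - f ((2 ^ m : ℕ) • x) * p‖ ≤ δ) :
    h (x * y) = h x * p := by
  have hc : Tendsto (fun m : ℕ => ((2 : ℝ) ^ m)⁻¹) atTop (𝓝 0) :=
    tendsto_inv_atTop_zero.comp (tendsto_pow_atTop_atTop_of_one_lt one_lt_two)
  refine hc.eq_mul_of_norm_sub_mul_le ?_ (hlim x) hδ
  simpa only [smul_mul_assoc] using hlim (x * y)

/-- Intermediate identity (2.5): h(a₁⋯aₙ) = h(a₁)·f(a₂)⋯f(aₙ). -/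
theorem stmt_2 {A B : Type*} [Ring A] [NormedRing B] [NormedAlgebra ℝ B]
    (n : ℕ) (hn : 2 ≤ n) (δ : ℝ) (f h : A → B)
    (hmul : ∀ a : Fin n → A,
      ‖f (List.ofFn a).prod - ((List.ofFn a).map f).prod‖ ≤ δ)
    (hlim : ∀ a : A, Tendsto (fun m : ℕ => ((2 : ℝ) ^ m)⁻¹ • f ((2 ^ m : ℕ) • a))
      atTop (𝓝 (h a))) :
    ∀ a : Fin n → A,
      h (List.ofFn a).prod
        = h (a ⟨0, by omega⟩) * (((List.ofFn a).drop 1).map f).prod := by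
  obtain ⟨k, rfl⟩ : ∃ k, n = k + 1 := ⟨n - 1, by omega⟩
  intro a
  simp only [List.ofFn_succ, List.prod_cons, List.drop_succ_cons, List.drop_zero, Fin.zero_eta]
  refine hyersLimit_mul_eq_of_norm_sub_mul_le (δ := δ) hlim fun m => ?_
  simpa [List.ofFn_succ, Fin.tail] using hmul (Fin.cons ((2 ^ m : ℕ) • a 0) (Fin.tail a))
end

section
/- Let A be a ring, B a Banach algebra, and f : A → B satisfy ‖f(a+b)−f(a)−f(b)‖ ≤ ε and ‖f(a₁⋯aₙ) − f(a₁)⋯f(aₙ)‖ ≤ δ. Let h(a) = limₘ 2^{−m} f(2^m a). Then for every k ∈ {1,…,n−1} and all a₁,…,aₙ ∈ A, h(a₁)⋯h(a_k)·f(a_{k+1})⋯f(aₙ) = h(a₁a₂⋯aₙ). -/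
/-!
Rescale the first `k` factors: replacing each `aᵢ` (`i ≤ k`) by `2ᵐ aᵢ` multiplies the product
`a₁⋯aₙ` by `2^{km}`. Applying the `δ`-multiplicativity of `f` to the rescaled tuple and dividing by
`2^{km}` shows that `2^{-km} f(2^{km} a₁⋯aₙ)` and
`2^{-m} f(2ᵐ a₁)⋯2^{-m} f(2ᵐ a_k) · f(a_{k+1})⋯f(aₙ)` differ by at most `2^{-km} δ`. As `m → ∞` the
first tends to `h(a₁⋯aₙ)` and the second to `h(a₁)⋯h(a_k) · f(a_{k+1})⋯f(aₙ)`.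
-/

open Filter Topology

theorem List.prod_map_smul {R M : Type*} [Monoid R] [Monoid M] [MulAction R M]
    [SMulCommClass R M M] [IsScalarTower R M M] (c : R) (l : List M) :
    (l.map (c • ·)).prod = c ^ l.length • l.prod := by
  induction l with
  | nil => simp
  | cons x l ih =>
    simp only [List.map_cons, List.prod_cons, List.length_cons, ih, smul_mul_smul_comm, pow_succ']

theorem norm_sub_prod_map_le_of_length_eq {A B : Type*} [Monoid A] [SeminormedRing B]
    (f : A → B) {n : ℕ} {δ : ℝ}
    (hmul : ∀ a : Fin n → A, ‖f (List.ofFn a).prod - ((List.ofFn a).map f).prod‖ ≤ δ)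
    {l : List A} (hl : l.length = n) : ‖f l.prod - (l.map f).prod‖ ≤ δ := by
  subst hl
  simpa using hmul l.get

section Rescale

variable {A B : Type*} [Semiring A] [NormedRing B] [NormedAlgebra ℝ B] (f h : A → B)

theorem tendsto_rescale_pow_mul
    (hlim : ∀ a : A, Tendsto (fun m : ℕ => ((2 : ℝ) ^ m)⁻¹ • f ((2 ^ m : ℕ) • a)) atTop (𝓝 (h a)))
    {j : ℕ} (hj : 0 < j) (a : A) :
    Tendsto (fun m : ℕ => ((2 : ℝ) ^ (j * m))⁻¹ • f ((2 ^ (j * m) : ℕ) • a)) atTop (𝓝 (h a)) :=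
  (hlim a).comp (tendsto_id.const_mul_atTop' hj)

theorem tendsto_prod_map_rescale
    (hlim : ∀ a : A, Tendsto (fun m : ℕ => ((2 : ℝ) ^ m)⁻¹ • f ((2 ^ m : ℕ) • a)) atTop (𝓝 (h a)))
    (l : List A) :
    Tendsto (fun m : ℕ => ((2 : ℝ) ^ (l.length * m))⁻¹ • (l.map fun x => f ((2 ^ m : ℕ) • x)).prod)
      atTop (𝓝 (l.map h).prod) := by
  convert tendsto_list_prod l (fun x _ => hlim x) using 2 with m
  have hmap : (l.map fun x => ((2 : ℝ) ^ m)⁻¹ • f ((2 ^ m : ℕ) • x)) =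
      (l.map fun x => f ((2 ^ m : ℕ) • x)).map (((2 : ℝ) ^ m)⁻¹ • ·) :=
    (List.map_map ..).symm
  rw [hmap, List.prod_map_smul, List.length_map, inv_pow, ← pow_mul, mul_comm]

theorem prod_map_mul_prod_map_eq {n : ℕ} {δ : ℝ}
    (hmul : ∀ l : List A, l.length = n → ‖f l.prod - (l.map f).prod‖ ≤ δ)
    (hlim : ∀ a : A, Tendsto (fun m : ℕ => ((2 : ℝ) ^ m)⁻¹ • f ((2 ^ m : ℕ) • a)) atTop (𝓝 (h a)))
    {l r : List A} (hl : l ≠ []) (hlr : l.length + r.length = n) :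
    (l.map h).prod * (r.map f).prod = h (l.prod * r.prod) := by
  set j := l.length
  have hj : 0 < j := List.length_pos_iff.mpr hl
  set c : ℕ → ℝ := fun m => ((2 : ℝ) ^ (j * m))⁻¹
  set u : ℕ → B := fun m => c m • ((l.map fun x => f ((2 ^ m : ℕ) • x)).prod * (r.map f).prod)
  set v : ℕ → B := fun m => c m • f ((2 ^ (j * m) : ℕ) • (l.prod * r.prod))
  have hu : Tendsto u atTop (𝓝 ((l.map h).prod * (r.map f).prod)) := by
    simpa only [u, smul_mul_assoc] using (tendsto_prod_map_rescale f h hlim l).mul_const _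
  have hv : Tendsto v atTop (𝓝 (h (l.prod * r.prod))) := tendsto_rescale_pow_mul f h hlim hj _
  have hc : Tendsto (fun m => c m * δ) atTop (𝓝 0) := by
    have hinv := tendsto_inv_atTop_zero.comp
      ((tendsto_pow_atTop_atTop_of_one_lt (one_lt_two : (1 : ℝ) < 2)).comp
        (tendsto_id.const_mul_atTop' hj))
    simpa using hinv.mul_const δ
  have hclose : ∀ m, dist (v m) (u m) ≤ c m * δ := by
    intro m
    have hbound := hmul (l.map ((2 ^ m : ℕ) • ·) ++ r) (by simpa using hlr)
    rw [List.prod_append, List.prod_map_smul, smul_mul_assoc, ← pow_mul,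
      mul_comm m, List.map_append, List.map_map, List.prod_append] at hbound
    rw [dist_eq_norm, ← smul_sub, norm_smul, Real.norm_of_nonneg (by positivity)]
    exact mul_le_mul_of_nonneg_left hbound (by positivity)
  exact tendsto_nhds_unique hu
    (hv.congr_dist (squeeze_zero (fun _ => dist_nonneg) hclose hc))

end Rescale

theorem stmt_3_general {A B : Type*} [Ring A] [NormedRing B] [NormedAlgebra ℝ B]
    (n : ℕ) (δ : ℝ) (f h : A → B)
    (hmul : ∀ a : Fin n → A,
      ‖f (List.ofFn a).prod - ((List.ofFn a).map f).prod‖ ≤ δ)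
    (hlim : ∀ a : A, Tendsto (fun m : ℕ => ((2 : ℝ) ^ m)⁻¹ • f ((2 ^ m : ℕ) • a))
      atTop (𝓝 (h a))) :
    ∀ (a : Fin n → A) (k : ℕ), 1 ≤ k → k ≤ n - 1 →
      (((List.ofFn a).take k).map h).prod * (((List.ofFn a).drop k).map f).prod
        = h (List.ofFn a).prod := by
  intro a k hk1 hkn
  rw [← List.prod_take_mul_prod_drop (List.ofFn a) k]
  refine prod_map_mul_prod_map_eq f h (fun l hl => norm_sub_prod_map_le_of_length_eq f hmul hl)
    hlim ?_ ?_
  · simp only [ne_eq, List.take_eq_nil_iff, List.ofFn_eq_nil_iff]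
    omega
  · simp only [List.length_take, List.length_drop, List.length_ofFn]
    omega

/-- Mixed identity (2.6): h(a₁)⋯h(a_k)·f(a_{k+1})⋯f(aₙ) = h(a₁⋯aₙ). -/
theorem stmt_3 {A B : Type*} [Ring A] [NormedRing B] [NormedAlgebra ℝ B]
    [CompleteSpace B]
    (n : ℕ) (hn : 2 ≤ n) (ε δ : ℝ) (hε : 0 ≤ ε) (hδ : 0 ≤ δ) (f h : A → B)
    (hadd : ∀ a b : A, ‖f (a + b) - f a - f b‖ ≤ ε)
    (hmul : ∀ a : Fin n → A,
      ‖f (List.ofFn a).prod - ((List.ofFn a).map f).prod‖ ≤ δ)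
    (hlim : ∀ a : A, Tendsto (fun m : ℕ => ((2 : ℝ) ^ m)⁻¹ • f ((2 ^ m : ℕ) • a))
      atTop (𝓝 (h a))) :
    ∀ (a : Fin n → A) (k : ℕ), 1 ≤ k → k ≤ n - 1 →
      (((List.ofFn a).take k).map h).prod * (((List.ofFn a).drop k).map f).prod
        = h (List.ofFn a).prod :=
  stmt_3_general n δ f h hmul hlim
end

section
/- Under the hypotheses of the stability theorem for n-ring derivations (f : A → X with ‖f(a+b)−f(a)−f(b)‖ ≤ ε(‖a‖^p+‖b‖^p), the product inequality, p ≠ 1, and D the unique n-ring derivation with ‖f(a)−D(a)‖ ≤ (2ε/(2−2^p))‖a‖^p), if moreover f(ca) = c f(a) for all scalars c ∈ ℂ and a ∈ A, then f = D; in particular f itself is an n-ring derivation. -/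
/-!
The difference `g = f - D` commutes with multiplication by natural numbers (`f` is homogeneous,
`D` additive) and satisfies `‖g x‖ ≤ C ‖x‖ ^ p`. Rescaling `x` by `m` (if `p < 1`) or by `1 / m`
(if `p > 1`) gives `‖g x‖ ≤ C ‖x‖ ^ p m ^ (-|1 - p|)`, which tends to `0` as `m → ∞`, whatever
the sign of `C`.
-/

open Filter Topology MulOpposite

theorem nonpos_of_forall_le_mul_natCast_rpow_neg {a K q : ℝ} (hq : 0 < q)
    (h : ∀ m : ℕ, 0 < m → a ≤ K * (m : ℝ) ^ (-q)) : a ≤ 0 := by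
  have hlim : Tendsto (fun m : ℕ => K * (m : ℝ) ^ (-q)) atTop (𝓝 0) := by
    simpa using ((tendsto_rpow_neg_atTop hq).comp tendsto_natCast_atTop_atTop).const_mul K
  exact ge_of_tendsto hlim (eventually_gt_atTop 0 |>.mono h)

section

variable {E F : Type*} [SeminormedAddCommGroup E] [NormedAddCommGroup F] [NormedSpace ℝ F]
  {g : E → F} {C p : ℝ}

theorem norm_map_nsmul_of_map_nsmul (hg : ∀ (m : ℕ) x, g (m • x) = m • g x) (m : ℕ) (x : E) :
    ‖g (m • x)‖ = m * ‖g x‖ := by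
  rw [hg, ← Nat.cast_smul_eq_nsmul ℝ, norm_smul, Real.norm_natCast]

variable [NormedSpace ℝ E]

theorem norm_le_mul_natCast_rpow_sub_one (hg : ∀ (m : ℕ) x, g (m • x) = m • g x)
    (hC : ∀ x, ‖g x‖ ≤ C * ‖x‖ ^ p) (x : E) {m : ℕ} (hm : 0 < m) :
    ‖g x‖ ≤ C * ‖x‖ ^ p * (m : ℝ) ^ (p - 1) := by
  have hm' : (0 : ℝ) < m := by exact_mod_cast hm
  have h := hC (m • x)
  rw [norm_map_nsmul_of_map_nsmul hg, ← Nat.cast_smul_eq_nsmul ℝ, norm_smul, Real.norm_natCast,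
    Real.mul_rpow hm'.le (norm_nonneg x)] at h
  calc ‖g x‖ = m * ‖g x‖ / m := by field_simp
    _ ≤ C * ((m : ℝ) ^ p * ‖x‖ ^ p) / m := by gcongr
    _ = C * ‖x‖ ^ p * (m : ℝ) ^ (p - 1) := by rw [Real.rpow_sub_one hm'.ne']; ring

theorem norm_le_mul_natCast_rpow_one_sub (hg : ∀ (m : ℕ) x, g (m • x) = m • g x)
    (hC : ∀ x, ‖g x‖ ≤ C * ‖x‖ ^ p) (x : E) {m : ℕ} (hm : 0 < m) :
    ‖g x‖ ≤ C * ‖x‖ ^ p * (m : ℝ) ^ (1 - p) := by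
  have hm' : (0 : ℝ) < m := by exact_mod_cast hm
  set y : E := (m : ℝ)⁻¹ • x
  have hx : m • y = x := by
    rw [← Nat.cast_smul_eq_nsmul ℝ, smul_inv_smul₀ hm'.ne']
  have hy : ‖y‖ = (m : ℝ)⁻¹ * ‖x‖ := by
    rw [norm_smul, norm_inv, Real.norm_natCast]
  calc ‖g x‖ = m * ‖g y‖ := by rw [← hx, norm_map_nsmul_of_map_nsmul hg]
    _ ≤ m * (C * ((m : ℝ)⁻¹ * ‖x‖) ^ p) := by rw [← hy]; gcongr; exact hC y
    _ = C * ‖x‖ ^ p * (m : ℝ) ^ (1 - p) := by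
      rw [Real.mul_rpow (by positivity) (norm_nonneg x), Real.inv_rpow hm'.le,
        Real.rpow_sub hm', Real.rpow_one]
      ring

theorem eq_zero_of_map_nsmul_of_norm_le_rpow (hp : p ≠ 1) (hg : ∀ (m : ℕ) x, g (m • x) = m • g x) (hC : ∀ x, ‖g x‖ ≤ C * ‖x‖ ^ p) :
    g = 0 := by
  funext x
  rw [Pi.zero_apply, ← norm_le_zero_iff]
  rcases hp.lt_or_gt with hp | hp
  · refine nonpos_of_forall_le_mul_natCast_rpow_neg (K := C * ‖x‖ ^ p) (sub_pos.2 hp)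
      fun m hm => ?_
    rw [neg_sub]
    exact norm_le_mul_natCast_rpow_sub_one hg hC x hm
  · refine nonpos_of_forall_le_mul_natCast_rpow_neg (K := C * ‖x‖ ^ p) (sub_pos.2 hp)
      fun m hm => ?_
    rw [neg_sub]
    exact norm_le_mul_natCast_rpow_one_sub hg hC x hm

end

theorem stmt_6_general {A X : Type*} [NormedRing A] [NormedAlgebra ℂ A]
    [NormedAddCommGroup X] [NormedSpace ℂ X]
    (ε p : ℝ) (hp1 : p ≠ 1)
    (f D : A → X)
    (hD : ∀ a b : A, D (a + b) = D a + D b)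
    (hbound : ∀ a : A, ‖f a - D a‖ ≤ 2 * ε / (2 - 2 ^ p) * ‖a‖ ^ p)
    (hhom : ∀ (c : ℂ) (a : A), f (c • a) = c • f a) :
    f = D := by
  have hDm : ∀ (m : ℕ) a, D (m • a) = m • D a := map_nsmul (AddMonoidHom.mk' D hD)
  have hfm : ∀ (m : ℕ) a, f (m • a) = m • f a := fun m a => by
    simpa only [Nat.cast_smul_eq_nsmul] using hhom m a
  refine sub_eq_zero.1 (eq_zero_of_map_nsmul_of_norm_le_rpow hp1 (fun m a => ?_) hbound)
  simp only [Pi.sub_apply, hfm, hDm, smul_sub]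

/-- Theorem 2.3, last part: if f is ℂ-homogeneous then f coincides with the
n-ring derivation D approximating it. -/
theorem stmt_6 {A X : Type*} [NormedRing A] [NormedAlgebra ℂ A]
    [NormedAddCommGroup X] [NormedSpace ℂ X] [CompleteSpace X]
    [Module A X] [Module Aᵐᵒᵖ X] [SMulCommClass A Aᵐᵒᵖ X]
    (n : ℕ) (hn : 2 ≤ n) (ε p : ℝ) (hε : 0 ≤ ε) (hp : 0 ≤ p) (hp1 : p ≠ 1)
    (f D : A → X)
    (hadd : ∀ a b : A, ‖f (a + b) - f a - f b‖ ≤ ε * (‖a‖ ^ p + ‖b‖ ^ p))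
    (hmul : ∀ a : Fin n → A,
      ‖f (List.ofFn a).prod -
          ∑ j : Fin n, ((List.ofFn a).take (j : ℕ)).prod •
            op (((List.ofFn a).drop ((j : ℕ) + 1)).prod) • f (a j)‖
        ≤ ε * ∑ i : Fin n, ‖a i‖ ^ p)
    (hD : ∀ a b : A, D (a + b) = D a + D b)
    (hDer : ∀ a : Fin n → A, D (List.ofFn a).prod
      = ∑ j : Fin n, ((List.ofFn a).take (j : ℕ)).prod •
          op (((List.ofFn a).drop ((j : ℕ) + 1)).prod) • D (a j))
    (hbound : ∀ a : A, ‖f a - D a‖ ≤ 2 * ε / (2 - 2 ^ p) * ‖a‖ ^ p)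
    (hhom : ∀ (c : ℂ) (a : A), f (c • a) = c • f a) :
    f = D :=
  stmt_6_general ε p hp1 f D hD hbound hhom
end

section
/- Define φ : ℝ → ℝ by φ(x) = 0 for |x| ≤ 1 and φ(x) = x·ln|x| for |x| > 1, and let f : ℝ → M₃(ℝ) send x to the matrix with φ(x) in the (2,1) entry and zeros elsewhere. Then there exist ε, δ > 0 with |f(a+b) − f(a) − f(b)| ≤ ε(|a| + |b|) and ‖f(a₁⋯aₙ) − f(a₁)⋯f(aₙ)‖ ≤ δ·|a₁|²⋯|aₙ|² for all reals, yet there is no n-ring homomorphism h : ℝ → M₃(ℝ) and constant k > 0 such that ‖f(a) − h(a)‖ ≤ kε|a| for all a ∈ ℝ. -/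
/-!
Write `ψ x = x log |x|`. For `|b| ≤ |a|`, subtracting `log |a|` from every logarithm turns the
additive defect of `ψ` into a sum of two terms `y log (|y| / |a|)` with `|y| ≤ 2 |a|`, so it is
bounded by `4 (|a| + |b|)`. The truncation `φ` differs from `ψ` by at most `2` and vanishes on
`[-1, 1]`, which gives the first estimate. Products of two matrices supported on the `(1, 0)` entry
vanish, so the multiplicative defect is `|φ (∏ aᵢ)| ≤ (∏ aᵢ) ^ 2`. Finally, the `(1, 0)` entry of an
additive `h` is additive, hence equal to `2 ^ M * g 1` at `2 ^ M`, while `φ (2 ^ M) = 2 ^ M * M log 2`;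
so `‖f - h‖ ≤ C |x|` would bound `M log 2` uniformly in `M`.
-/

attribute [local instance] Matrix.normedAddCommGroup

open Real

namespace Real

lemma abs_mul_log_le_two {t : ℝ} (h0 : 0 ≤ t) (h2 : t ≤ 2) : |t * log t| ≤ 2 := by
  rcases h0.eq_or_lt with rfl | hpos
  · simp
  rcases le_total t 1 with h1 | h1
  · rw [mul_comm]
    linarith [abs_log_mul_self_lt t hpos h1]
  · have hlog : log t ≤ t - 1 := log_le_sub_one_of_pos hpos
    rw [abs_of_nonneg (mul_nonneg h0 (log_nonneg h1))]
    nlinarith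

lemma abs_mul_log_abs_le_two {x : ℝ} (hx : |x| ≤ 2) : |(x * log |x|)| ≤ 2 := by
  simpa only [abs_mul, abs_abs] using abs_mul_log_le_two (abs_nonneg x) hx

lemma abs_mul_log_abs_div_le {x y : ℝ} (h : |y| ≤ 2 * |x|) :
    |y * log (|y| / |x|)| ≤ 2 * |x| := by
  rcases eq_or_ne x 0 with rfl | hx
  · simp
  have hyx : |y / x| ≤ 2 := by rw [abs_div, div_le_iff₀ (abs_pos.2 hx)]; exact h
  calc |y * log (|y| / |x|)| = |x| * |(y / x * log |y / x|)| := by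
        rw [← abs_div, ← abs_mul, ← mul_assoc, mul_div_cancel₀ y hx]
    _ ≤ |x| * 2 := by gcongr; exact abs_mul_log_abs_le_two hyx
    _ = 2 * |x| := mul_comm _ _

lemma mul_log_abs_div {x : ℝ} (hx : x ≠ 0) (y : ℝ) :
    y * log (|y| / |x|) = y * log |y| - y * log |x| := by
  rcases eq_or_ne y 0 with rfl | hy
  · simp
  rw [log_div (abs_ne_zero.2 hy) (abs_ne_zero.2 hx), mul_sub]

lemma abs_mul_log_abs_add_sub_le_of_abs_le {a b : ℝ} (hba : |b| ≤ |a|) :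
    |((a + b) * log |a + b| - a * log |a| - b * log |b|)| ≤ 4 * (|a| + |b|) := by
  rcases eq_or_ne a 0 with rfl | ha
  · obtain rfl : b = 0 := abs_nonpos_iff.1 (by simpa using hba)
    simp
  -- the coefficients `a + b`, `-a`, `-b` sum to zero, so `log |a|` may be subtracted from each log
  have hdefect : (a + b) * log |a + b| - a * log |a| - b * log |b| =
      (a + b) * log (|a + b| / |a|) - b * log (|b| / |a|) := by
    rw [mul_log_abs_div ha, mul_log_abs_div ha]; ring
  have hsum : |(a + b) * log (|a + b| / |a|)| ≤ 2 * |a| :=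
    abs_mul_log_abs_div_le (by linarith [abs_add_le a b])
  have hb : |b * log (|b| / |a|)| ≤ 2 * |a| :=
    abs_mul_log_abs_div_le (by linarith [abs_nonneg a])
  rw [hdefect]
  calc _ ≤ |(a + b) * log (|a + b| / |a|)| + |b * log (|b| / |a|)| := abs_sub _ _
    _ ≤ 4 * (|a| + |b|) := by linarith [abs_nonneg b]

lemma abs_mul_log_abs_add_sub_le (a b : ℝ) :
    |((a + b) * log |a + b| - a * log |a| - b * log |b|)| ≤ 4 * (|a| + |b|) := by
  rcases le_total |b| |a| with h | h
  · exact abs_mul_log_abs_add_sub_le_of_abs_le h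
  · have := abs_mul_log_abs_add_sub_le_of_abs_le h
    rwa [add_comm b, sub_right_comm, add_comm |b|] at this

end Real

noncomputable def truncMulLog (x : ℝ) : ℝ := if |x| ≤ 1 then 0 else x * log |x|

lemma truncMulLog_of_abs_le_one {x : ℝ} (hx : |x| ≤ 1) : truncMulLog x = 0 := if_pos hx

lemma truncMulLog_of_one_le_abs {x : ℝ} (hx : 1 ≤ |x|) : truncMulLog x = x * log |x| := by
  rcases hx.eq_or_lt with h | h
  · simp [truncMulLog, ← h]
  · simp [truncMulLog, not_le.2 h]

lemma abs_truncMulLog_sub_le (x : ℝ) : |(truncMulLog x - x * log |x|)| ≤ 2 := by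
  rcases le_or_gt |x| 1 with h | h
  · simpa [truncMulLog_of_abs_le_one h] using abs_mul_log_abs_le_two (h.trans one_le_two)
  · simp [truncMulLog_of_one_le_abs h.le]

lemma abs_truncMulLog_add_sub_le (a b : ℝ) :
    |truncMulLog (a + b) - truncMulLog a - truncMulLog b| ≤ 10 * (|a| + |b|) := by
  by_cases hsmall : |a| + |b| < 1
  · rw [truncMulLog_of_abs_le_one ((abs_add_le a b).trans hsmall.le),
      truncMulLog_of_abs_le_one (by linarith [abs_nonneg b]),
      truncMulLog_of_abs_le_one (by linarith [abs_nonneg a])]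
    simp only [sub_zero, abs_zero]
    positivity
  · have hdefect := abs_mul_log_abs_add_sub_le a b
    have e₁ := abs_truncMulLog_sub_le (a + b)
    have e₂ := abs_truncMulLog_sub_le a
    have e₃ := abs_truncMulLog_sub_le b
    rw [abs_le] at hdefect e₁ e₂ e₃ ⊢
    constructor <;> linarith

lemma abs_truncMulLog_le_sq (x : ℝ) : |truncMulLog x| ≤ x ^ 2 := by
  rcases le_total |x| 1 with h | h
  · rw [truncMulLog_of_abs_le_one h, abs_zero]
    positivity
  · have hlog : log |x| ≤ |x| - 1 := log_le_sub_one_of_pos (by linarith)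
    rw [truncMulLog_of_one_le_abs h, abs_mul, abs_of_nonneg (log_nonneg h), ← sq_abs]
    nlinarith

lemma truncMulLog_two_pow (M : ℕ) : truncMulLog (2 ^ M) = 2 ^ M * (M * log 2) := by
  have h : (1 : ℝ) ≤ 2 ^ M := one_le_pow₀ one_le_two
  rw [truncMulLog_of_one_le_abs (by rwa [abs_of_pos (by positivity)]),
    abs_of_pos (by positivity), log_pow]

lemma not_exists_addMonoidHom_abs_truncMulLog_sub_le :
    ¬ ∃ (g : ℝ →+ ℝ) (C : ℝ), ∀ x, |truncMulLog x - g x| ≤ C * |x| := by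
  rintro ⟨g, C, hg⟩
  have hbound (M : ℕ) : M * log 2 ≤ C + g 1 := by
    have hpos : (0 : ℝ) < 2 ^ M := by positivity
    have hgM : g (2 ^ M) = 2 ^ M * g 1 := by
      simpa [nsmul_eq_mul] using g.map_nsmul (2 ^ M) 1
    have := hg (2 ^ M)
    rw [truncMulLog_two_pow, hgM, ← mul_sub, abs_mul, abs_of_pos hpos, mul_comm C,
      mul_le_mul_iff_of_pos_left hpos] at this
    linarith [le_abs_self (M * log 2 - g 1)]
  obtain ⟨M, hM⟩ := exists_nat_gt ((C + g 1) / log 2)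
  rw [div_lt_iff₀ (log_pos one_lt_two)] at hM
  linarith [hbound M]

namespace Matrix

lemma norm_single {m n α : Type*} [Fintype m] [Fintype n] [DecidableEq m] [DecidableEq n]
    [NormedAddCommGroup α] (i : m) (j : n) (c : α) : ‖single i j c‖ = ‖c‖ := by
  refine le_antisymm ((norm_le_iff (norm_nonneg c)).2 fun i' j' => ?_) ?_
  · rw [single_apply]
    split_ifs <;> simp
  · simpa using norm_entry_le_entrywise_sup_norm (single i j c) (i := i) (j := j)

lemma single_sub {m n α : Type*} [DecidableEq m] [DecidableEq n] [AddCommGroup α]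
    (i : m) (j : n) (a b : α) : single i j (a - b) = single i j a - single i j b :=
  map_sub (singleAddMonoidHom i j) a b

lemma prod_map_single_eq_zero {n α β : Type*} [Fintype n] [DecidableEq n] [Semiring α]
    {i j : n} (hij : j ≠ i) (c : β → α) :
    ∀ {l : List β}, 2 ≤ l.length → (l.map fun x => single i j (c x)).prod = 0
  | x :: _ :: _, _ => by simp [← mul_assoc, single_mul_single_of_ne (c x) i j i hij]

end Matrix

/-- Example 2.5: the Luminet-type counterexample showing Theorem 2.2 fails at p = 1. -/
theorem stmt_10 (n : ℕ) (hn : 2 ≤ n)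
    (φ : ℝ → ℝ) (hφ : ∀ x : ℝ, φ x = if |x| ≤ 1 then 0 else x * Real.log |x|)
    (f : ℝ → Matrix (Fin 3) (Fin 3) ℝ)
    (hf : ∀ x : ℝ, f x = Matrix.single 1 0 (φ x)) :
    ∃ ε > (0 : ℝ), ∃ δ > (0 : ℝ),
      (∀ a b : ℝ, ‖f (a + b) - f a - f b‖ ≤ ε * (|a| + |b|)) ∧
      (∀ a : Fin n → ℝ,
        ‖f (List.ofFn a).prod - ((List.ofFn a).map f).prod‖
          ≤ δ * ∏ i : Fin n, |a i| ^ 2) ∧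
      ¬ ∃ (h : ℝ → Matrix (Fin 3) (Fin 3) ℝ) (k : ℝ), 0 < k ∧
          (∀ a b : ℝ, h (a + b) = h a + h b) ∧
          (∀ a : Fin n → ℝ, h (List.ofFn a).prod = ((List.ofFn a).map h).prod) ∧
          (∀ a : ℝ, ‖f a - h a‖ ≤ k * ε * |a|) := by
  obtain rfl : φ = truncMulLog := funext hφ
  obtain rfl : f = fun x => Matrix.single 1 0 (truncMulLog x) := funext hf
  refine ⟨10, by norm_num, 1, one_pos, fun a b => ?_, fun a => ?_, ?_⟩
  · rw [← Matrix.single_sub, ← Matrix.single_sub, Matrix.norm_single]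
    exact abs_truncMulLog_add_sub_le a b
  · rw [Matrix.prod_map_single_eq_zero (by decide) _ (by simpa using hn), sub_zero,
      Matrix.norm_single,
      List.prod_ofFn, one_mul, Real.norm_eq_abs, Finset.prod_pow, ← Finset.abs_prod, sq_abs]
    exact abs_truncMulLog_le_sq _
  · rintro ⟨h, k, -, hadd, -, hclose⟩
    refine not_exists_addMonoidHom_abs_truncMulLog_sub_le
      ⟨(Matrix.entryAddMonoidHom ℝ 1 0).comp (AddMonoidHom.mk' h hadd), k * 10, fun x => ?_⟩
    calc |truncMulLog x - h x 1 0|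
        = ‖(Matrix.single (1 : Fin 3) (0 : Fin 3) (truncMulLog x) - h x) 1 0‖ := by simp
      _ ≤ ‖Matrix.single 1 0 (truncMulLog x) - h x‖ := Matrix.norm_entry_le_entrywise_sup_norm _
      _ ≤ k * 10 * |x| := hclose x
end

section
/- Let φ(x) = x·ln|x| for |x| > 1 and φ(x) = 0 for |x| ≤ 1. Then there exists ε > 0 such that |φ(x+y) − φ(x) − φ(y)| ≤ ε(|x| + |y|) for all x, y ∈ ℝ, but for no additive function T : ℝ → ℝ and constant k > 0 does |φ(x) − T(x)| ≤ k|x| hold for all x ∈ ℝ. -/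
/-! The function `ψ x = x * log |x|` is odd, and for `a, b ≥ 0` its defect
`(a + b) log (a + b) - a log a - b log b` lies in `[0, a + b]`, by monotonicity of `log` and
`log t ≤ t - 1`. Every pair `x, y` reduces to this case by oddness, since two of the three
numbers `x, y, -(x + y)` have the same sign. Because `|φ - ψ| ≤ 1`, the defect of `φ` is bounded by
`|x| + |y| + 3`, and it vanishes when `|x| + |y| ≤ 1`.

An additive `T` satisfies `T n = n T 1` on `ℕ`, so `|φ - T| ≤ k |x|` at `x = n > 1` would give
`log n ≤ T 1 + k` for every such `n`. -/

open Real

noncomputable def xLogAbs (x : ℝ) : ℝ := x * log |x|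

lemma xLogAbs_neg (x : ℝ) : xLogAbs (-x) = -xLogAbs x := by
  simp [xLogAbs]

lemma xLogAbs_of_nonneg {x : ℝ} (hx : 0 ≤ x) : xLogAbs x = x * log x := by
  rw [xLogAbs, abs_of_nonneg hx]

lemma mul_log_le_mul_log_add {a b : ℝ} (ha : 0 ≤ a) (hb : 0 ≤ b) :
    a * log a ≤ a * log (a + b) := by
  rcases ha.eq_or_lt with rfl | ha
  · simp
  exact mul_le_mul_of_nonneg_left (log_le_log ha (by linarith)) ha.le

lemma mul_log_add_sub_le {a b : ℝ} (ha : 0 ≤ a) (hb : 0 ≤ b) :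
    a * (log (a + b) - log a) ≤ b := by
  rcases ha.eq_or_lt with rfl | ha
  · simpa using hb
  calc a * (log (a + b) - log a) = a * log ((a + b) / a) := by
        rw [log_div (by linarith) ha.ne']
    _ ≤ a * ((a + b) / a - 1) :=
        mul_le_mul_of_nonneg_left (log_le_sub_one_of_pos (by positivity)) ha.le
    _ = b := by field_simp; ring

lemma abs_xLogAbs_add_sub_le_of_nonneg {a b : ℝ} (ha : 0 ≤ a) (hb : 0 ≤ b) :
    |xLogAbs (a + b) - xLogAbs a - xLogAbs b| ≤ a + b := by
  have hab := mul_log_add_sub_le ha hb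
  have hba := mul_log_add_sub_le hb ha
  have hab' := mul_log_le_mul_log_add ha hb
  have hba' := mul_log_le_mul_log_add hb ha
  rw [add_comm b] at hba hba'
  rw [xLogAbs_of_nonneg ha, xLogAbs_of_nonneg hb, xLogAbs_of_nonneg (add_nonneg ha hb), abs_le]
  constructor <;> linarith

lemma abs_xLogAbs_add_sub_le (x y : ℝ) :
    |xLogAbs (x + y) - xLogAbs x - xLogAbs y| ≤ |x| + |y| := by
  wlog hx : 0 ≤ x generalizing x y
  · have := this (-x) (-y) (by linarith)
    rwa [← neg_add, xLogAbs_neg, xLogAbs_neg, xLogAbs_neg, abs_neg, abs_neg, ← abs_neg,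
      show -(-xLogAbs (x + y) - -xLogAbs x - -xLogAbs y) = xLogAbs (x + y) - xLogAbs x - xLogAbs y
        by ring] at this
  rcases le_total 0 y with hy | hy
  · simpa [abs_of_nonneg hx, abs_of_nonneg hy] using abs_xLogAbs_add_sub_le_of_nonneg hx hy
  have hxy : |x| + |y| = x - y := by rw [abs_of_nonneg hx, abs_of_nonpos hy]; ring
  rw [hxy, abs_le]
  rcases le_total 0 (x + y) with hs | hs
  · have := abs_xLogAbs_add_sub_le_of_nonneg hs (neg_nonneg.2 hy)
    rw [add_neg_cancel_right, xLogAbs_neg, abs_le] at this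
    constructor <;> linarith
  · have := abs_xLogAbs_add_sub_le_of_nonneg hx (neg_nonneg.2 hs)
    rw [show x + -(x + y) = -y by ring, xLogAbs_neg, xLogAbs_neg, abs_le] at this
    constructor <;> linarith

noncomputable def truncXLogAbs (x : ℝ) : ℝ := if |x| ≤ 1 then 0 else xLogAbs x

lemma abs_xLogAbs_le_one {x : ℝ} (hx : |x| ≤ 1) : |xLogAbs x| ≤ 1 := by
  rcases (abs_nonneg x).eq_or_lt with h0 | h0
  · simp [xLogAbs, ← h0]
  have h := abs_log_mul_self_lt |x| h0 hx
  rw [abs_mul, abs_abs, mul_comm] at h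
  rw [xLogAbs, abs_mul]
  exact h.le

lemma abs_truncXLogAbs_sub_xLogAbs_le_one (x : ℝ) : |truncXLogAbs x - xLogAbs x| ≤ 1 := by
  unfold truncXLogAbs
  split_ifs with hx
  · simpa using abs_xLogAbs_le_one hx
  · simp

lemma abs_truncXLogAbs_add_sub_le (x y : ℝ) :
    |truncXLogAbs (x + y) - truncXLogAbs x - truncXLogAbs y| ≤ 4 * (|x| + |y|) := by
  by_cases hxy : |x| + |y| ≤ 1
  · have hx : |x| ≤ 1 := by linarith [abs_nonneg y]
    have hy : |y| ≤ 1 := by linarith [abs_nonneg x]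
    have hs : |x + y| ≤ 1 := (abs_add_le x y).trans hxy
    simp only [truncXLogAbs, if_pos hx, if_pos hy, if_pos hs, sub_self, abs_zero]
    positivity
  have h := abs_xLogAbs_add_sub_le x y
  have hs := abs_truncXLogAbs_sub_xLogAbs_le_one (x + y)
  have hx := abs_truncXLogAbs_sub_xLogAbs_le_one x
  have hy := abs_truncXLogAbs_sub_xLogAbs_le_one y
  rw [abs_le] at h hs hx hy ⊢
  constructor <;> linarith

lemma truncXLogAbs_natCast {n : ℕ} (hn : 1 < n) : truncXLogAbs n = n * log n := by
  have hn' : (1 : ℝ) < n := by exact_mod_cast hn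
  rw [truncXLogAbs, if_neg (by rw [Nat.abs_cast]; exact hn'.not_ge), xLogAbs, Nat.abs_cast]

lemma apply_natCast_of_additive {T : ℝ → ℝ} (hT : ∀ x y, T (x + y) = T x + T y) (n : ℕ) :
    T n = n * T 1 := by
  simpa using map_nsmul (AddMonoidHom.mk' T hT) n 1

/-- The core analytic counterexample at p = 1: φ is approximately additive with
linear control, but is not approximated by any additive map with linear error. -/
theorem stmt_11 (φ : ℝ → ℝ)
    (hφ : ∀ x : ℝ, φ x = if |x| ≤ 1 then 0 else x * Real.log |x|) :
    (∃ ε > (0 : ℝ), ∀ x y : ℝ, |φ (x + y) - φ x - φ y| ≤ ε * (|x| + |y|)) ∧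
    (∀ T : ℝ → ℝ, (∀ x y : ℝ, T (x + y) = T x + T y) →
      ∀ k : ℝ, 0 < k → ¬ ∀ x : ℝ, |φ x - T x| ≤ k * |x|) := by
  obtain rfl : φ = truncXLogAbs := funext hφ
  refine ⟨⟨4, by norm_num, abs_truncXLogAbs_add_sub_le⟩, fun T hT k _ hk => ?_⟩
  obtain ⟨n, hn⟩ := exists_nat_gt (max 1 (exp (k + T 1)))
  have hn1 : 1 < n := by exact_mod_cast (le_max_left _ _).trans_lt hn
  have hn0 : (0 : ℝ) < n := by positivity
  have hlog : k + T 1 < log n := (lt_log_iff_exp_lt hn0).2 ((le_max_right _ _).trans_lt hn)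
  have hbound := hk n
  rw [truncXLogAbs_natCast hn1, apply_natCast_of_additive hT, Nat.abs_cast, ← mul_sub, abs_mul,
    Nat.abs_cast, mul_comm k, mul_le_mul_iff_right₀ hn0] at hbound
  linarith [le_abs_self (log n - T 1)]
end

section
/- Let A be a ring, B a Banach algebra, and f : A → B with ‖f(a+b) − f(a) − f(b)‖ ≤ ε for all a, b ∈ A. Then for each a ∈ A the sequence (2^{−m} f(2^m a))ₘ is Cauchy, its limit h(a) defines an additive map, ‖f(a) − h(a)‖ ≤ ε for all a, and h is the unique additive map within bounded distance of f. -/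
/-!
Put `x = 2ᵐ • a`. The defect inequality at `(x, x)` says that consecutive terms of
`2⁻ᵐ • f (2ᵐ • a)` differ by at most `ε / 2ᵐ⁺¹`, so the sequence is Cauchy and its limit `h a` lies
within `ε/2 + ε/4 + ⋯ = ε` of its first term `f a`. The defect at `(2ᵐ • a, 2ᵐ • b)`, divided by
`2ᵐ`, tends to zero, which makes `h` additive. An additive `g` is fixed by the doubling procedure,
and a bounded difference `f - g` is divided by `2ᵐ`, so the sequence also tends to `g a`.
-/

open Filter Topology

theorem tendsto_of_norm_sub_le_two_pow_inv_mul {E : Type*} [SeminormedAddCommGroup E]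
    {u v : ℕ → E} {x : E} {C : ℝ}
    (hv : Tendsto v atTop (𝓝 x)) (huv : ∀ m, ‖u m - v m‖ ≤ ((2 : ℝ) ^ m)⁻¹ * C) :
    Tendsto u atTop (𝓝 x) := by
  have hC : Tendsto (fun m : ℕ => ((2 : ℝ) ^ m)⁻¹ * C) atTop (𝓝 0) := by
    simpa using (tendsto_inv_atTop_zero.comp
      (tendsto_pow_atTop_atTop_of_one_lt one_lt_two)).mul_const C
  simpa using hv.add (squeeze_zero_norm huv hC)

section Hyers

variable {A E : Type*} [AddCommMonoid A] [NormedAddCommGroup E] [NormedSpace ℝ E]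

noncomputable def hyersSeq (f : A → E) (a : A) (m : ℕ) : E :=
  ((2 : ℝ) ^ m)⁻¹ • f ((2 ^ m : ℕ) • a)

noncomputable def hyersLimit (f : A → E) (a : A) : E :=
  limUnder atTop (hyersSeq f a)

theorem norm_two_pow_inv_smul_le {x : E} {C : ℝ} (hx : ‖x‖ ≤ C) (m : ℕ) :
    ‖((2 : ℝ) ^ m)⁻¹ • x‖ ≤ ((2 : ℝ) ^ m)⁻¹ * C := by
  rw [norm_smul, norm_inv, norm_pow, Real.norm_ofNat]
  exact mul_le_mul_of_nonneg_left hx (by positivity)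

theorem hyersSeq_zero (f : A → E) (a : A) : hyersSeq f a 0 = f a := by
  simp [hyersSeq]

theorem hyersSeq_of_map_add {g : A → E} (hg : ∀ a b, g (a + b) = g a + g b) (a : A) (m : ℕ) :
    hyersSeq g a m = g a := by
  have hnsmul : g ((2 ^ m : ℕ) • a) = (2 ^ m : ℕ) • g a :=
    map_nsmul (AddMonoidHom.mk' g hg) _ _
  rw [hyersSeq, hnsmul, ← Nat.cast_smul_eq_nsmul ℝ, smul_smul]
  simp

theorem norm_hyersSeq_sub_hyersSeq_le {f g : A → E} {C : ℝ} (hC : ∀ a, ‖f a - g a‖ ≤ C)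
    (a : A) (m : ℕ) : ‖hyersSeq f a m - hyersSeq g a m‖ ≤ ((2 : ℝ) ^ m)⁻¹ * C := by
  rw [hyersSeq, hyersSeq, ← smul_sub]
  exact norm_two_pow_inv_smul_le (hC _) m

theorem tendsto_hyersSeq_of_map_add {f g : A → E} (hg : ∀ a b, g (a + b) = g a + g b) {C : ℝ}
    (hC : ∀ a, ‖f a - g a‖ ≤ C) (a : A) : Tendsto (hyersSeq f a) atTop (𝓝 (g a)) :=
  tendsto_of_norm_sub_le_two_pow_inv_mul tendsto_const_nhds fun m => by
    simpa only [hyersSeq_of_map_add hg] using norm_hyersSeq_sub_hyersSeq_le hC a m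

variable {f : A → E} {ε : ℝ}

theorem dist_hyersSeq_succ_le (hf : ∀ a b, ‖f (a + b) - f a - f b‖ ≤ ε) (a : A) (m : ℕ) :
    dist (hyersSeq f a m) (hyersSeq f a (m + 1)) ≤ ε / 2 * (1 / 2) ^ m := by
  set x := (2 ^ m : ℕ) • a
  have hdouble : (2 ^ (m + 1) : ℕ) • a = x + x := by rw [pow_succ, mul_two, add_nsmul]
  have hdiff : hyersSeq f a (m + 1) - hyersSeq f a m
      = ((2 : ℝ) ^ (m + 1))⁻¹ • (f (x + x) - f x - f x) := by
    rw [hyersSeq, hyersSeq, hdouble]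
    match_scalars
    field_simp
    ring
  calc dist (hyersSeq f a m) (hyersSeq f a (m + 1))
      = ‖((2 : ℝ) ^ (m + 1))⁻¹ • (f (x + x) - f x - f x)‖ := by
        rw [dist_comm, dist_eq_norm, hdiff]
    _ ≤ ((2 : ℝ) ^ (m + 1))⁻¹ * ε := norm_two_pow_inv_smul_le (hf x x) _
    _ = ε / 2 * (1 / 2) ^ m := by rw [pow_succ, one_div, inv_pow]; ring

theorem cauchySeq_hyersSeq (hf : ∀ a b, ‖f (a + b) - f a - f b‖ ≤ ε) (a : A) :
    CauchySeq (hyersSeq f a) :=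
  cauchySeq_of_le_geometric _ _ (by norm_num) (dist_hyersSeq_succ_le hf a)

theorem norm_hyersSeq_add_sub_le (hf : ∀ a b, ‖f (a + b) - f a - f b‖ ≤ ε) (a b : A) (m : ℕ) :
    ‖hyersSeq f (a + b) m - (hyersSeq f a m + hyersSeq f b m)‖ ≤ ((2 : ℝ) ^ m)⁻¹ * ε := by
  rw [hyersSeq, hyersSeq, hyersSeq, nsmul_add, ← sub_sub, ← smul_sub, ← smul_sub]
  exact norm_two_pow_inv_smul_le (hf _ _) m

variable [CompleteSpace E]

theorem tendsto_hyersLimit (hf : ∀ a b, ‖f (a + b) - f a - f b‖ ≤ ε) (a : A) :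
    Tendsto (hyersSeq f a) atTop (𝓝 (hyersLimit f a)) :=
  (cauchySeq_hyersSeq hf a).tendsto_limUnder

theorem hyersLimit_add (hf : ∀ a b, ‖f (a + b) - f a - f b‖ ≤ ε) (a b : A) :
    hyersLimit f (a + b) = hyersLimit f a + hyersLimit f b :=
  tendsto_nhds_unique (tendsto_hyersLimit hf (a + b)) <|
    tendsto_of_norm_sub_le_two_pow_inv_mul
      ((tendsto_hyersLimit hf a).add (tendsto_hyersLimit hf b)) (norm_hyersSeq_add_sub_le hf a b)

theorem norm_sub_hyersLimit_le (hf : ∀ a b, ‖f (a + b) - f a - f b‖ ≤ ε) (a : A) :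
    ‖f a - hyersLimit f a‖ ≤ ε := by
  have h := dist_le_of_le_geometric_of_tendsto₀ _ _ (by norm_num)
    (dist_hyersSeq_succ_le hf a) (tendsto_hyersLimit hf a)
  rwa [hyersSeq_zero, dist_eq_norm, show ε / 2 / (1 - 1 / 2) = ε by ring] at h

end Hyers

theorem stmt_12_general {A B : Type*} [Ring A] [NormedRing B] [NormedAlgebra ℝ B]
    [CompleteSpace B] (ε : ℝ) (f : A → B)
    (hadd : ∀ a b : A, ‖f (a + b) - f a - f b‖ ≤ ε) :
    (∀ a : A, CauchySeq (fun m : ℕ => ((2 : ℝ) ^ m)⁻¹ • f ((2 ^ m : ℕ) • a))) ∧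
    ∃ h : A → B,
      (∀ a : A, Tendsto (fun m : ℕ => ((2 : ℝ) ^ m)⁻¹ • f ((2 ^ m : ℕ) • a))
        atTop (𝓝 (h a))) ∧
      (∀ a b : A, h (a + b) = h a + h b) ∧
      (∀ a : A, ‖f a - h a‖ ≤ ε) ∧
      (∀ g : A → B, (∀ a b : A, g (a + b) = g a + g b) →
        (∃ C : ℝ, ∀ a : A, ‖f a - g a‖ ≤ C) → g = h) :=
  ⟨cauchySeq_hyersSeq hadd, hyersLimit f, tendsto_hyersLimit hadd, hyersLimit_add hadd,
    norm_sub_hyersLimit_le hadd, fun _ hg ⟨_, hC⟩ => funext fun a =>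
      tendsto_nhds_unique (tendsto_hyersSeq_of_map_add hg hC a) (tendsto_hyersLimit hadd a)⟩

/-- Hyers' theorem in the setting of the paper. -/
theorem stmt_12 {A B : Type*} [Ring A] [NormedRing B] [NormedAlgebra ℝ B]
    [CompleteSpace B] (ε : ℝ) (hε : 0 ≤ ε) (f : A → B)
    (hadd : ∀ a b : A, ‖f (a + b) - f a - f b‖ ≤ ε) :
    (∀ a : A, CauchySeq (fun m : ℕ => ((2 : ℝ) ^ m)⁻¹ • f ((2 ^ m : ℕ) • a))) ∧
    ∃ h : A → B,
      (∀ a : A, Tendsto (fun m : ℕ => ((2 : ℝ) ^ m)⁻¹ • f ((2 ^ m : ℕ) • a))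
        atTop (𝓝 (h a))) ∧
      (∀ a b : A, h (a + b) = h a + h b) ∧
      (∀ a : A, ‖f a - h a‖ ≤ ε) ∧
      (∀ g : A → B, (∀ a b : A, g (a + b) = g a + g b) →
        (∃ C : ℝ, ∀ a : A, ‖f a - g a‖ ≤ C) → g = h) :=
  stmt_12_general ε f hadd
end
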